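/- Let r ≥ 2 be an integer, R > 0, let d be the homogeneous quasi-distance on 𝔽_{r2} with d(p,q) := inf{λ > 0 : ‖δ_{1/λ}(p⁻¹·q)‖ ≤ R}, and let a = 0.9, a' = 1.9. There exists δ > 0 such that for all p, q ∈ 𝔽_{r2} with v_p, v_q, w_p, w_q nonzero satisfying a·‖v_p‖² < R·‖w_p‖ ≤ a'·‖v_p‖², a·‖v_q‖² < R·‖w_q‖ ≤ a'·‖v_q‖², ∠(v_p,v_q) < δ and ∠(w_p,w_q) < δ, one has d(p,q) ≤ d(0,p) or d(p,q) ≤ d(0,q). -/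

import Mathlib

namespace Fr2

/-- Index set for the second-layer coordinates: pairs `i < j`. -/
abbrev UT (r : ℕ) := {ij : Fin r × Fin r // ij.1 < ij.2}

/-- Carrier of `𝔽_{r2}`: `p = (v_p, w_p)` with `v_p ∈ ℝ^r` and `w_p ∈ ℝ^{r(r-1)/2}`. -/
abbrev G (r : ℕ) := (Fin r → ℝ) × (UT r → ℝ)

/-- Group law of `𝔽_{r2}`. -/
noncomputable def mul {r : ℕ} (p q : G r) : G r :=
  (fun i => p.1 i + q.1 i,
   fun ij => p.2 ij + q.2 ij +
     (p.1 ij.1.1 * q.1 ij.1.2 - q.1 ij.1.1 * p.1 ij.1.2) / 2)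

/-- Group inverse of `𝔽_{r2}`. -/
noncomputable def inv {r : ℕ} (p : G r) : G r := (fun i => -p.1 i, fun ij => -p.2 ij)

/-- Dilation of factor `l`. -/
noncomputable def dil {r : ℕ} (l : ℝ) (p : G r) : G r := (fun i => l * p.1 i, fun ij => l ^ 2 * p.2 ij)

/-- Square of the Euclidean norm. -/
noncomputable def normSq {r : ℕ} (p : G r) : ℝ := (∑ i, (p.1 i) ^ 2) + ∑ ij, (p.2 ij) ^ 2

/-- The homogeneous quasi-distance whose unit ball centered at the identity is the
Euclidean ball of radius `R`. -/
noncomputable def dist (R : ℝ) {r : ℕ} (p q : G r) : ℝ :=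
  sInf {l : ℝ | 0 < l ∧ normSq (dil (1 / l) (mul (inv p) q)) ≤ R ^ 2}

end Fr2

/-- Euclidean scalar product on `ι → ℝ`. -/
def innerF {ι : Type*} [Fintype ι] (u v : ι → ℝ) : ℝ := ∑ i, u i * v i

/-- Euclidean norm on `ι → ℝ`. -/
noncomputable def normF {ι : Type*} [Fintype ι] (u : ι → ℝ) : ℝ :=
  Real.sqrt (innerF u u)

/-- The (non-oriented) Euclidean angle between two vectors, in `[0, π]`, characterized by
`cos ∠(u,v) = ⟨u,v⟩ / (‖u‖·‖v‖)`. -/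
noncomputable def angleF {ι : Type*} [Fintype ι] (u v : ι → ℝ) : ℝ :=
  Real.arccos (innerF u v / (normF u * normF v))

/-!
Let `λ = d(0,p)`, so that `R²λ⁴ = ‖v_p‖²λ² + ‖w_p‖²`, and assume `d(0,q) ≤ λ` (the other case is
symmetric), so that `‖v_q‖²λ² + ‖w_q‖² ≤ R²λ⁴`. Then `d(p,q) ≤ λ` amounts to
`‖v_q - v_p‖²λ² + ‖w_q - w_p + [v_q, v_p]‖² ≤ R²λ⁴`. Small angles make `‖v_q - v_p‖` and
`‖w_q - w_p‖` close to `|‖v_q‖ - ‖v_p‖|` and `|‖w_q‖ - ‖w_p‖|`, and make the bracket small by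
Lagrange's identity. The region condition on `p` gives `‖v_q‖ ≤ Rλ ≤ 1.8 ‖v_p‖` and
`‖w_q‖ ≤ Rλ² ≤ 1.8 ‖w_p‖`, and this factor `1.8 < 2` leaves room to absorb all error terms.
-/

open InnerProductGeometry RealInnerProductSpace

section Euclidean

variable {ι : Type*} [Fintype ι]

lemma innerF_eq_inner (u v : ι → ℝ) :
    innerF u v = ⟪(WithLp.toLp 2 u : EuclideanSpace ℝ ι), WithLp.toLp 2 v⟫ := by
  simp [innerF, PiLp.inner_apply, mul_comm]

lemma normF_eq_norm (u : ι → ℝ) : normF u = ‖(WithLp.toLp 2 u : EuclideanSpace ℝ ι)‖ := by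
  rw [normF, innerF_eq_inner, real_inner_self_eq_norm_sq, Real.sqrt_sq (norm_nonneg _)]

lemma angleF_eq_angle (u v : ι → ℝ) :
    angleF u v = angle (WithLp.toLp 2 u : EuclideanSpace ℝ ι) (WithLp.toLp 2 v) := by
  rw [angleF, angle, innerF_eq_inner, normF_eq_norm, normF_eq_norm]

lemma angleF_comm (u v : ι → ℝ) : angleF u v = angleF v u := by
  rw [angleF_eq_angle, angleF_eq_angle, angle_comm]

lemma normF_sq (u : ι → ℝ) : normF u ^ 2 = ∑ i, u i ^ 2 := by
  simp [normF_eq_norm, EuclideanSpace.norm_sq_eq]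

lemma normF_pos {u : ι → ℝ} (hu : u ≠ 0) : 0 < normF u := by
  rw [normF_eq_norm, norm_pos_iff]
  simpa using hu

lemma sum_sum_mul_sub_mul_sq (f g : ι → ℝ) :
    ∑ i, ∑ j, (f i * g j - g i * f j) ^ 2 =
      2 * ((∑ i, f i ^ 2) * (∑ i, g i ^ 2) - (∑ i, f i * g i) ^ 2) := by
  have hexpand : ∀ i j, (f i * g j - g i * f j) ^ 2 =
      f i ^ 2 * g j ^ 2 + g i ^ 2 * f j ^ 2 - 2 * (f i * g i) * (f j * g j) := fun i j => by ring
  simp only [hexpand, Finset.sum_add_distrib, Finset.sum_sub_distrib, ← Finset.mul_sum,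
    ← Finset.sum_mul]
  ring

end Euclidean

lemma le_iff_of_quartic_root {R U A μ l : ℝ} (hA : 0 < A) (hμ : 0 < μ)
    (hroot : R ^ 2 * μ ^ 4 = U * μ ^ 2 + A) (hl : 0 < l) :
    U * l ^ 2 + A ≤ R ^ 2 * l ^ 4 ↔ μ ≤ l := by
  have hμU : 0 < R ^ 2 * μ ^ 2 - U := by
    have h : μ ^ 2 * (R ^ 2 * μ ^ 2 - U) = A := by linear_combination hroot
    exact pos_of_mul_pos_right (h ▸ hA) (by positivity)
  have hpos : 0 < R ^ 2 * (l ^ 2 + μ ^ 2) - U := by nlinarith [pow_pos hl 2]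
  have hfactor : R ^ 2 * l ^ 4 - (U * l ^ 2 + A) =
      (l ^ 2 - μ ^ 2) * (R ^ 2 * (l ^ 2 + μ ^ 2) - U) := by
    linear_combination hroot
  rw [← sub_nonneg, hfactor, mul_nonneg_iff_of_pos_right hpos, sub_nonneg,
    pow_le_pow_iff_left₀ hμ.le hl.le two_ne_zero]

lemma exists_quartic_root {R A : ℝ} (hR : 0 < R) (hA : 0 < A) (U : ℝ) :
    ∃ μ, 0 < μ ∧ R ^ 2 * μ ^ 4 = U * μ ^ 2 + A := by
  obtain ⟨s, hs0, hs⟩ : ∃ s : ℝ, 0 ≤ s ∧ s ^ 2 = U ^ 2 + 4 * R ^ 2 * A :=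
    ⟨_, Real.sqrt_nonneg _, Real.sq_sqrt (by positivity)⟩
  have hm : 0 < (U + s) / (2 * R ^ 2) := by
    have : 0 < U + s := by nlinarith [mul_pos (pow_pos hR 2) hA]
    positivity
  refine ⟨Real.sqrt ((U + s) / (2 * R ^ 2)), Real.sqrt_pos.2 hm, ?_⟩
  rw [show (4:ℕ) = 2 * 2 by rfl, pow_mul, Real.sq_sqrt hm.le]
  field_simp
  linear_combination hs

lemma le_of_sq_eq_mul_add_sq {X U s : ℝ} (hX : 0 < X) (h : X ^ 2 = U * X + s ^ 2)
    (h1 : 0.9 * U < s) (h2 : s ≤ 1.9 * U) : X ≤ 3.24 * U ∧ X ≤ 1.8 * s := by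
  have hU : 0 < U := by linarith
  constructor
  · nlinarith
  · nlinarith

lemma mul_le_of_quartic_root {R l u a : ℝ} (hR : 0 < R) (hl : 0 < l) (hu : 0 ≤ u)
    (hroot : R ^ 2 * l ^ 4 = u ^ 2 * l ^ 2 + a ^ 2) (h1 : 0.9 * u ^ 2 < R * a)
    (h2 : R * a ≤ 1.9 * u ^ 2) : R * l ≤ 1.8 * u ∧ R * l ^ 2 ≤ 1.8 * a := by
  obtain ⟨hRl_sq, hRl2_sq⟩ := le_of_sq_eq_mul_add_sq (X := (R * l) ^ 2) (U := u ^ 2) (s := R * a)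
    (by positivity) (by linear_combination R ^ 2 * hroot) h1 h2
  constructor
  · nlinarith
  · nlinarith

lemma le_of_sq_mul_sq_add_sq_le {R l v W : ℝ} (hR : 0 ≤ R) (hl : 0 < l)
    (h : v ^ 2 * l ^ 2 + W ^ 2 ≤ R ^ 2 * l ^ 4) : v ≤ R * l ∧ W ≤ R * l ^ 2 := by
  constructor
  · refine le_of_sq_le_sq ?_ (by positivity)
    have : v ^ 2 * l ^ 2 ≤ (R * l) ^ 2 * l ^ 2 := by nlinarith
    exact le_of_mul_le_mul_right this (by positivity)
  · exact le_of_sq_le_sq (by nlinarith) (by positivity)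

section InnerProductSpace

variable {E F : Type*} [NormedAddCommGroup E] [InnerProductSpace ℝ E] [NormedAddCommGroup F]
  [InnerProductSpace ℝ F]

lemma one_sub_sq_div_two_mul_le_inner_of_angle_lt {x y : E} {d : ℝ} (hd : d ≤ Real.pi)
    (h : angle x y < d) : (1 - d ^ 2 / 2) * (‖x‖ * ‖y‖) ≤ ⟪x, y⟫ := by
  rw [← cos_angle_mul_norm_mul_norm]
  gcongr
  exact Real.one_sub_sq_div_two_le_cos.trans
    (Real.cos_le_cos_of_nonneg_of_le_pi (angle_nonneg x y) hd h.le)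

lemma sq_mul_sq_sub_inner_sq_le_of_angle_lt {x y : E} {d : ℝ} (h : angle x y < d) :
    ‖x‖ ^ 2 * ‖y‖ ^ 2 - ⟪x, y⟫ ^ 2 ≤ (d * (‖x‖ * ‖y‖)) ^ 2 := by
  have hsin : Real.sin (angle x y) ≤ d :=
    (Real.sin_le (angle_nonneg x y)).trans h.le
  calc ‖x‖ ^ 2 * ‖y‖ ^ 2 - ⟪x, y⟫ ^ 2 = (Real.sin (angle x y) * (‖x‖ * ‖y‖)) ^ 2 := by
        rw [← cos_angle_mul_norm_mul_norm]
        linear_combination -(‖x‖ * ‖y‖) ^ 2 * Real.sin_sq_add_cos_sq (angle x y)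
    _ ≤ (d * (‖x‖ * ‖y‖)) ^ 2 := by
        have := sin_angle_nonneg x y
        gcongr

lemma norm_sub_sq_le_of_inner_ge {x y : E} {d : ℝ} (h : (1 - d ^ 2 / 2) * (‖x‖ * ‖y‖) ≤ ⟪x, y⟫) :
    ‖y - x‖ ^ 2 ≤ (‖y‖ - ‖x‖) ^ 2 + d ^ 2 * (‖x‖ * ‖y‖) := by
  rw [norm_sub_sq_real, real_inner_comm]
  linarith

lemma norm_add_sq_le_of_norm_le {v : F} (w : F) {c : ℝ} (hv : ‖v‖ ≤ c) :
    ‖v + w‖ ^ 2 ≤ ‖v‖ ^ 2 + 2 * (c * ‖w‖) + ‖w‖ ^ 2 := by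
  rw [norm_add_sq_real]
  nlinarith [real_inner_le_norm v w, norm_nonneg w]

lemma norm_sub_sq_mul_sq_add_norm_sub_add_sq_le {R l d : ℝ} {x y : E} {X Y B : F}
    (hR : 0 < R) (hl : 0 < l) (hd0 : 0 ≤ d) (hd : d ≤ 1 / 10) (hdR : d * R ≤ 1 / 25)
    (hp : R ^ 2 * l ^ 4 = ‖x‖ ^ 2 * l ^ 2 + ‖X‖ ^ 2)
    (hreg : 0.9 * ‖x‖ ^ 2 < R * ‖X‖) (hreg' : R * ‖X‖ ≤ 1.9 * ‖x‖ ^ 2)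
    (hq : ‖y‖ ^ 2 * l ^ 2 + ‖Y‖ ^ 2 ≤ R ^ 2 * l ^ 4)
    (hxy : (1 - d ^ 2 / 2) * (‖x‖ * ‖y‖) ≤ ⟪x, y⟫) (hXY : (1 - d ^ 2 / 2) * (‖X‖ * ‖Y‖) ≤ ⟪X, Y⟫)
    (hB : ‖B‖ ≤ d * (‖x‖ * ‖y‖)) :
    ‖y - x‖ ^ 2 * l ^ 2 + ‖Y - X + B‖ ^ 2 ≤ R ^ 2 * l ^ 4 := by
  obtain ⟨hRl, hRl2⟩ := mul_le_of_quartic_root hR hl (norm_nonneg x) hp hreg hreg'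
  obtain ⟨hy, hY⟩ := le_of_sq_mul_sq_add_sq_le hR.le hl hq
  obtain ⟨hx, hX⟩ := le_of_sq_mul_sq_add_sq_le hR.le hl hp.ge
  have hv := norm_sub_sq_le_of_inner_ge hxy
  have hw := norm_sub_sq_le_of_inner_ge hXY
  have hwB := norm_add_sq_le_of_norm_le B ((norm_sub_le Y X).trans_eq (add_comm _ _))
  have hut : 0 ≤ ‖x‖ * ‖y‖ * l ^ 2 := by positivity
  have hab : 0 ≤ ‖X‖ * ‖Y‖ := by positivity
  have hd2 : d ^ 2 ≤ 1 / 100 := by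
    calc d ^ 2 ≤ (1 / 10) ^ 2 := by gcongr
      _ = 1 / 100 := by norm_num
  have hyy : ‖y‖ * ‖y‖ ≤ 1.8 * ‖x‖ * ‖y‖ := by gcongr; linarith
  have hYY : ‖Y‖ * ‖Y‖ ≤ 1.8 * ‖X‖ * ‖Y‖ := by gcongr; linarith
  have hcross : (‖X‖ + ‖Y‖) * ‖B‖ ≤ 2 * (d * R) * (‖x‖ * ‖y‖ * l ^ 2) := by
    calc (‖X‖ + ‖Y‖) * ‖B‖ ≤ (2 * (R * l ^ 2)) * (d * (‖x‖ * ‖y‖)) := by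
          gcongr
          linarith
      _ = 2 * (d * R) * (‖x‖ * ‖y‖ * l ^ 2) := by ring
  have hBB : ‖B‖ ^ 2 ≤ (d * R) ^ 2 * (‖x‖ * ‖y‖ * l ^ 2) := by
    calc ‖B‖ ^ 2 ≤ (d * (‖x‖ * ‖y‖)) ^ 2 := by gcongr
      _ = d ^ 2 * (‖x‖ * ‖y‖) * (‖x‖ * ‖y‖) := by ring
      _ ≤ d ^ 2 * (‖x‖ * ‖y‖) * ((R * l) * (R * l)) := by gcongr
      _ = (d * R) ^ 2 * (‖x‖ * ‖y‖ * l ^ 2) := by ring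
  have hdR2 : (d * R) ^ 2 ≤ 1 / 625 := by
    calc (d * R) ^ 2 ≤ (1 / 25) ^ 2 := by gcongr
      _ = 1 / 625 := by norm_num
  linarith [mul_le_mul_of_nonneg_right hv (sq_nonneg l),
    mul_le_mul_of_nonneg_right hyy (sq_nonneg l), mul_le_mul_of_nonneg_right hd2 hut,
    mul_le_mul_of_nonneg_right hd2 hab,
    mul_le_mul_of_nonneg_right hdR hut, mul_le_mul_of_nonneg_right hdR2 hut]

end InnerProductSpace

namespace Fr2

variable {r : ℕ}

noncomputable def bracket (x y : Fin r → ℝ) : UT r → ℝ :=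
  fun ij => (x ij.1.1 * y ij.1.2 - y ij.1.1 * x ij.1.2) / 2

lemma mul_inv_left (p q : G r) : mul (inv p) q = (q.1 - p.1, q.2 - p.2 + bracket q.1 p.1) := by
  ext <;> simp only [mul, inv, bracket, Pi.sub_apply, Pi.add_apply] <;> ring

lemma inv_mul_inv_left (p q : G r) : inv (mul (inv p) q) = mul (inv q) p := by
  ext <;> simp only [mul, inv] <;> ring

lemma inv_zero_mul (p : G r) : mul (inv 0) p = p := by
  ext <;> simp [mul, inv]

lemma normSq_dil (c : ℝ) (z : G r) :
    normSq (dil c z) = c ^ 2 * normF z.1 ^ 2 + c ^ 4 * normF z.2 ^ 2 := by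
  simp only [normSq, dil, normF_sq, Finset.mul_sum, mul_pow, ← pow_mul]

lemma normSq_dil_inv (c : ℝ) (z : G r) : normSq (dil c (inv z)) = normSq (dil c z) := by
  simp [normSq, dil, inv]

lemma normSq_dil_one_div_le_iff {R l : ℝ} (hl : 0 < l) (z : G r) :
    normSq (dil (1 / l) z) ≤ R ^ 2 ↔ normF z.1 ^ 2 * l ^ 2 + normF z.2 ^ 2 ≤ R ^ 2 * l ^ 4 := by
  rw [normSq_dil, ← mul_le_mul_iff_of_pos_right (pow_pos hl 4)]
  field_simp

lemma dist_comm (R : ℝ) (p q : G r) : dist R p q = dist R q p := by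
  simp only [dist, ← inv_mul_inv_left q p, normSq_dil_inv]

lemma two_mul_normF_bracket_sq_le (x y : Fin r → ℝ) :
    2 * normF (bracket x y) ^ 2 ≤ normF x ^ 2 * normF y ^ 2 - innerF x y ^ 2 := by
  set c : Fin r × Fin r → ℝ := fun ij => (x ij.1 * y ij.2 - y ij.1 * x ij.2) ^ 2
  have hsub : ∑ ij : UT r, c ij ≤ ∑ ij, c ij := by
    rw [← Fintype.sum_subtype_add_sum_subtype (fun ij : Fin r × Fin r => ij.1 < ij.2) c]
    exact le_add_of_nonneg_right (Finset.sum_nonneg fun _ _ => sq_nonneg _)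
  have hall : ∑ ij, c ij = 2 * (normF x ^ 2 * normF y ^ 2 - innerF x y ^ 2) := by
    rw [Fintype.sum_prod_type, sum_sum_mul_sub_mul_sq, normF_sq, normF_sq, innerF]
  have hbr : normF (bracket x y) ^ 2 = (∑ ij : UT r, c ij) / 4 := by
    rw [normF_sq, Finset.sum_div]
    exact Finset.sum_congr rfl fun ij _ => by simp only [bracket, c]; ring
  linarith

lemma normF_bracket_le_of_angleF_lt {x y : Fin r → ℝ} {d : ℝ} (h : angleF x y < d) :
    normF (bracket y x) ≤ d * (normF x * normF y) := by
  have hsq := two_mul_normF_bracket_sq_le y x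
  rw [angleF_eq_angle] at h
  have hsin := sq_mul_sq_sub_inner_sq_le_of_angle_lt h
  rw [← normF_eq_norm, ← normF_eq_norm, ← innerF_eq_inner] at hsin
  have hd : 0 ≤ d := (angle_nonneg _ _).trans h.le
  refine le_of_sq_le_sq ?_ (mul_nonneg hd (mul_nonneg (Real.sqrt_nonneg _) (Real.sqrt_nonneg _)))
  rw [show innerF y x = innerF x y by simp only [innerF, mul_comm]] at hsq
  nlinarith [sq_nonneg (normF (bracket y x))]

lemma dist_le_of_sq_mul_sq_add_sq_le {R l : ℝ} (hl : 0 < l) {p q : G r}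
    (h : normF (q.1 - p.1) ^ 2 * l ^ 2 + normF (q.2 - p.2 + bracket q.1 p.1) ^ 2 ≤ R ^ 2 * l ^ 4) :
    dist R p q ≤ l :=
  csInf_le ⟨0, fun _ hm => hm.1.le⟩ ⟨hl, by rwa [normSq_dil_one_div_le_iff hl, mul_inv_left]⟩

lemma dist_zero_eq_of_quartic_root {R μ : ℝ} {p : G r} (hw : 0 < normF p.2) (hμ : 0 < μ)
    (hroot : R ^ 2 * μ ^ 4 = normF p.1 ^ 2 * μ ^ 2 + normF p.2 ^ 2) : dist R 0 p = μ := by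
  have hball : {l : ℝ | 0 < l ∧ normSq (dil (1 / l) (mul (inv 0) p)) ≤ R ^ 2} = Set.Ici μ := by
    ext l
    simp only [Set.mem_ofPred_eq, Set.mem_Ici, inv_zero_mul]
    refine ⟨fun ⟨hl, h⟩ => ?_, fun h => ⟨hμ.trans_le h, ?_⟩⟩
    · rwa [normSq_dil_one_div_le_iff hl, le_iff_of_quartic_root (pow_pos hw 2) hμ hroot hl] at h
    · rwa [normSq_dil_one_div_le_iff (hμ.trans_le h),
        le_iff_of_quartic_root (pow_pos hw 2) hμ hroot (hμ.trans_le h)]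
  rw [dist, hball, csInf_Ici]

lemma dist_le_dist_zero_of_dist_zero_le {R d : ℝ} (hR : 0 < R) (hd : d ≤ 1 / 10)
    (hdR : d * R ≤ 1 / 25) {p q : G r} (hq : q.2 ≠ 0)
    (hreg : 0.9 * normF p.1 ^ 2 < R * normF p.2 ∧ R * normF p.2 ≤ 1.9 * normF p.1 ^ 2)
    (hv : angleF p.1 q.1 < d) (hw : angleF p.2 q.2 < d) (hle : dist R 0 q ≤ dist R 0 p) :
    dist R p q ≤ dist R 0 p := by
  have hpw : 0 < normF p.2 :=
    pos_of_mul_pos_right ((by positivity : (0 : ℝ) ≤ 0.9 * normF p.1 ^ 2).trans_lt hreg.1) hR.le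
  have hqw := normF_pos hq
  obtain ⟨l, hl, hpl⟩ := exists_quartic_root hR (pow_pos hpw 2) (normF p.1 ^ 2)
  obtain ⟨m, hm, hqm⟩ := exists_quartic_root hR (pow_pos hqw 2) (normF q.1 ^ 2)
  rw [dist_zero_eq_of_quartic_root hpw hl hpl] at hle ⊢
  rw [dist_zero_eq_of_quartic_root hqw hm hqm] at hle
  have hql := (le_iff_of_quartic_root (pow_pos hqw 2) hm hqm hl).2 hle
  have hB := normF_bracket_le_of_angleF_lt hv
  have hd0 : 0 ≤ d := (Real.arccos_nonneg _).trans hv.le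
  have hdπ : d ≤ Real.pi := by linarith [Real.pi_gt_three]
  rw [angleF_eq_angle] at hv hw
  refine dist_le_of_sq_mul_sq_add_sq_le hl ?_
  simp only [normF_eq_norm, WithLp.toLp_sub, WithLp.toLp_add] at hpl hreg hql hB ⊢
  exact norm_sub_sq_mul_sq_add_norm_sub_add_sq_le hR hl hd0 hd hdR hpl hreg.1 hreg.2 hql
    (one_sub_sq_div_two_mul_le_inner_of_angle_lt hdπ hv)
    (one_sub_sq_div_two_mul_le_inner_of_angle_lt hdπ hw) hB

end Fr2

theorem statement16_general (r : ℕ) (R : ℝ) (hR : 0 < R) :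
    ∃ δ : ℝ, 0 < δ ∧ ∀ p q : Fr2.G r,
      p.1 ≠ 0 → q.1 ≠ 0 → p.2 ≠ 0 → q.2 ≠ 0 →
      ((0.9 : ℝ) * (normF p.1) ^ 2 < R * normF p.2 ∧ R * normF p.2 ≤ (1.9 : ℝ) * (normF p.1) ^ 2) →
      ((0.9 : ℝ) * (normF q.1) ^ 2 < R * normF q.2 ∧ R * normF q.2 ≤ (1.9 : ℝ) * (normF q.1) ^ 2) →
      angleF p.1 q.1 < δ → angleF p.2 q.2 < δ →
      Fr2.dist R p q ≤ Fr2.dist R 0 p ∨ Fr2.dist R p q ≤ Fr2.dist R 0 q := by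
  refine ⟨min (1 / 10) (1 / (25 * R)), by positivity, ?_⟩
  intro p q _ _ hp hq hpreg hqreg hv hw
  have hd : min (1 / 10) (1 / (25 * R)) ≤ 1 / 10 := min_le_left _ _
  have hdR : min (1 / 10) (1 / (25 * R)) * R ≤ 1 / 25 :=
    calc min (1 / 10) (1 / (25 * R)) * R ≤ 1 / (25 * R) * R := by gcongr; exact min_le_right _ _
      _ = 1 / 25 := by field_simp
  rcases le_total (Fr2.dist R 0 q) (Fr2.dist R 0 p) with h | h
  · exact Or.inl (Fr2.dist_le_dist_zero_of_dist_zero_le hR hd hdR hq hpreg hv hw h)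
  · right
    rw [Fr2.dist_comm]
    exact Fr2.dist_le_dist_zero_of_dist_zero_le hR hd hdR hp hqreg
      (angleF_comm p.1 q.1 ▸ hv) (angleF_comm p.2 q.2 ▸ hw) h

/-- Lemma for points in the intermediate region `𝓟_a \ 𝓟_{a'}`, `a = 0.9`, `a' = 1.9`. -/
theorem statement16 (r : ℕ) (hr : 2 ≤ r) (R : ℝ) (hR : 0 < R) :
    ∃ δ : ℝ, 0 < δ ∧ ∀ p q : Fr2.G r,
      p.1 ≠ 0 → q.1 ≠ 0 → p.2 ≠ 0 → q.2 ≠ 0 →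
      ((0.9 : ℝ) * (normF p.1) ^ 2 < R * normF p.2 ∧ R * normF p.2 ≤ (1.9 : ℝ) * (normF p.1) ^ 2) →
      ((0.9 : ℝ) * (normF q.1) ^ 2 < R * normF q.2 ∧ R * normF q.2 ≤ (1.9 : ℝ) * (normF q.1) ^ 2) →
      angleF p.1 q.1 < δ → angleF p.2 q.2 < δ →
      Fr2.dist R p q ≤ Fr2.dist R 0 p ∨ Fr2.dist R p q ≤ Fr2.dist R 0 q :=
  statement16_general r R hR
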